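/- arXiv:2509.19869 — 3 statements merged into one kernel-verified Lean document; each statement's English description precedes it below -/
import Mathlib

section
/- Let f(x,u) = Φ⁻¹(AΦ(x) + BΨ(u;x) + c), where Φ is a componentwise strictly increasing diffeomorphism of ℝ^{n_x} and Ψ is an input transformation that is componentwise strictly increasing in u. Then for all x ∈ ℝ^{n_x}, u ∈ ℝ^{n_u}, all i ∈ {1,…,n_x}, and all j ∈ {1,…,n_u}: σ(∂f_i/∂u_j(x,u)) = σ(B_{ij}). Consequently, for any sign sets S^input_{ij} ⊆ {1,−1,0}, the system satisfies the sign constraints σ(∂f_i/∂u_j) ∈ S^input_{ij} everywhere if and only if σ(B_{ij}) ∈ S^input_{ij} for all i, j. -/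
/-- For the exactly linearizable model `f(x,u) = Φ⁻¹(AΦ(x) + BΨ(u;x) + c)` with `Φ`
a componentwise strictly increasing diffeomorphism (`Φ(x)_i = φ_i(x_i)` with each
`φ_i` a `C¹` bijection with everywhere positive derivative) and `Ψ` componentwise
strictly increasing in `u` (`Ψ(u;x)_j = ψ_j(u_j;x)` with `∂ψ_j/∂u_j > 0`), one has
`σ(∂f_i/∂u_j(x,u)) = σ(B_{ij})` for all `x, u, i, j`; consequently, for any sign
sets `S^input_{ij} ⊆ {1, -1, 0}`, the sign constraints `σ(∂f_i/∂u_j) ∈ S^input_{ij}`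
hold everywhere iff `σ(B_{ij}) ∈ S^input_{ij}`. -/
theorem exlin_input_sign_eq_and_sign_constraints_iff {nx nu : ℕ}
    (A : Matrix (Fin nx) (Fin nx) ℝ) (B : Matrix (Fin nx) (Fin nu) ℝ)
    (c : Fin nx → ℝ)
    (φ : Fin nx → ℝ → ℝ) (φinv : Fin nx → ℝ → ℝ)
    (hφ : ∀ i, ContDiff ℝ 1 (φ i))
    (hφbij : ∀ i, Function.Bijective (φ i))
    (hφ' : ∀ i s, 0 < deriv (φ i) s)
    (hφinvL : ∀ i, Function.LeftInverse (φinv i) (φ i))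
    (hφinvR : ∀ i, Function.RightInverse (φinv i) (φ i))
    (ψ : Fin nu → ℝ → (Fin nx → ℝ) → ℝ)
    (hψ : ∀ (j : Fin nu) (x : Fin nx → ℝ), ContDiff ℝ 1 (fun t => ψ j t x))
    (hψ' : ∀ (j : Fin nu) (x : Fin nx → ℝ) (s : ℝ),
        0 < deriv (fun t => ψ j t x) s)
    (f : (Fin nx → ℝ) → (Fin nu → ℝ) → (Fin nx → ℝ))
    (hf : ∀ x u i, f x u i =
        φinv i ((A.mulVec (fun k => φ k (x k))
          + B.mulVec (fun j => ψ j (u j) x) + c) i))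
    (Sinput : Fin nx → Fin nu → Set ℝ)
    (hS : ∀ i j, Sinput i j ⊆ ({1, -1, 0} : Set ℝ)) :
    (∀ (x : Fin nx → ℝ) (u : Fin nu → ℝ) (i : Fin nx) (j : Fin nu),
        Real.sign (deriv (fun s => f x (Function.update u j s) i) (u j))
          = Real.sign (B i j))
    ∧ ((∀ (x : Fin nx → ℝ) (u : Fin nu → ℝ) (i : Fin nx) (j : Fin nu),
          Real.sign (deriv (fun s => f x (Function.update u j s) i) (u j))
            ∈ Sinput i j)
        ↔ (∀ i j, Real.sign (B i j) ∈ Sinput i j)) := by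

  have key : ∀ (x : Fin nx → ℝ) (u : Fin nu → ℝ) (i : Fin nx) (j : Fin nu),
      Real.sign (deriv (fun s => f x (Function.update u j s) i) (u j))
        = Real.sign (B i j) := by
    intro x u i j
    have hmono : StrictMono (φ i) := strictMono_of_deriv_pos (hφ' i)
    have hcont : Continuous (φinv i) := by
      have heq : φinv i
          = ⇑(StrictMono.orderIsoOfSurjective (φ i) hmono (hφbij i).2).symm := by
        funext y
        apply hmono.injective
        rw [hφinvR i y]
        have h3 := congrFun (StrictMono.coe_orderIsoOfSurjective (f := φ i)
          (h_mono := hmono) (h_surj := (hφbij i).2))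
          ((StrictMono.orderIsoOfSurjective (φ i) hmono (hφbij i).2).symm y)
        rw [← h3]
        exact (OrderIso.apply_symm_apply _ y).symm
      rw [heq]
      exact (StrictMono.orderIsoOfSurjective (φ i) hmono (hφbij i).2).symm.continuous
    have hdinv : ∀ y : ℝ, HasDerivAt (φinv i) (deriv (φ i) (φinv i y))⁻¹ y := by
      intro y
      exact HasDerivAt.of_local_left_inverse hcont.continuousAt
        (((hφ i).differentiable one_ne_zero (φinv i y)).hasDerivAt)
        (hφ' i (φinv i y)).ne'
        (Filter.Eventually.of_forall (hφinvR i))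
    set b := B i j with hb
    set d := deriv (fun t => ψ j t x) (u j) with hd
    set D := A.mulVec (fun k => φ k (x k)) i + c i +
      ∑ j' ∈ Finset.univ.erase j, B i j' * ψ j' (u j') x with hD
    have hfun : (fun s => f x (Function.update u j s) i)
        = fun s => φinv i (D + b * ψ j s x) := by
      funext s
      rw [hf]
      congr 1
      have hsum : ∑ j' : Fin nu, B i j' * ψ j' (Function.update u j s j') x
          = b * ψ j s x + ∑ j' ∈ Finset.univ.erase j, B i j' * ψ j' (u j') x := by
        rw [← Finset.add_sum_erase _ _ (Finset.mem_univ j)]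
        congr 1
        · simp [hb]
        · apply Finset.sum_congr rfl
          intro j' hj'
          rw [Function.update_of_ne (Finset.ne_of_mem_erase hj')]
      simp only [Pi.add_apply, Matrix.mulVec, dotProduct, hsum, hD]
      ring
    have hψd : HasDerivAt (fun t => ψ j t x) d (u j) :=
      ((hψ j x).differentiable one_ne_zero (u j)).hasDerivAt
    have hinner : HasDerivAt (fun s => D + b * ψ j s x) (b * d) (u j) :=
      (hψd.const_mul b).const_add D
    set y0 := D + b * ψ j (u j) x with hy0
    have hcomp : HasDerivAt (fun s => φinv i (D + b * ψ j s x))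
        ((deriv (φ i) (φinv i y0))⁻¹ * (b * d)) (u j) :=
      (hdinv y0).comp (u j) hinner
    rw [hfun, hcomp.deriv]
    have hp : 0 < (deriv (φ i) (φinv i y0))⁻¹ := inv_pos.mpr (hφ' i _)
    have hdpos : 0 < d := hψ' j x (u j)
    rcases lt_trichotomy b 0 with hb0 | hb0 | hb0
    · rw [Real.sign_of_neg hb0, Real.sign_of_neg
        (mul_neg_of_pos_of_neg hp (mul_neg_of_neg_of_pos hb0 hdpos))]
    · simp [hb0]
    · rw [Real.sign_of_pos hb0, Real.sign_of_pos
        (mul_pos hp (mul_pos hb0 hdpos))]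
  refine ⟨key, ?_, ?_⟩
  · intro h i j
    have := h 0 0 i j
    rwa [key 0 0 i j] at this
  · intro h x u i j
    rw [key x u i j]
    exact h i j
end

section
/- Let f^c(x,u) be defined componentwise by f^c_i(x,u) = (AΦ(x) + BΨ(u) + c)_i / φ_i'(x_i), where Φ(x)_i = φ_i(x_i) with each φ_i a continuously differentiable bijection of ℝ with everywhere positive derivative, and Ψ : ℝ^{n_u} → ℝ^{n_u} is independent of x. Then for all x, u and all i ≠ j in {1,…,n_x}: σ(∂f^c_i/∂x_j(x,u)) = σ(A_{ij}). -/
lemma sign_mul_pos_right (a b : ℝ) (hb : 0 < b) :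
    Real.sign (a * b) = Real.sign a := by
  rcases lt_trichotomy a 0 with h | h | h
  · rw [Real.sign_of_neg h, Real.sign_of_neg (mul_neg_of_neg_of_pos h hb)]
  · simp [h]
  · rw [Real.sign_of_pos h, Real.sign_of_pos (mul_pos h hb)]

/-- For the continuous-time exactly linearizable vector field
`f^c_i(x,u) = (AΦ(x) + BΨ(u) + c)_i / φ_i'(x_i)`, where `Φ(x)_i = φ_i(x_i)` with
each `φ_i` a `C¹` bijection of `ℝ` with everywhere positive derivative and `Ψ`
independent of `x`, one has `σ(∂f^c_i/∂x_j(x,u)) = σ(A_{ij})` for all `x, u` and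
all `i ≠ j`. -/
theorem exlin_cont_state_sign_eq {nx nu : ℕ}
    (A : Matrix (Fin nx) (Fin nx) ℝ) (B : Matrix (Fin nx) (Fin nu) ℝ)
    (c : Fin nx → ℝ)
    (φ : Fin nx → ℝ → ℝ)
    (hφ : ∀ i, ContDiff ℝ 1 (φ i))
    (hφbij : ∀ i, Function.Bijective (φ i))
    (hφ' : ∀ i s, 0 < deriv (φ i) s)
    (Ψ : (Fin nu → ℝ) → (Fin nu → ℝ))
    (fc : (Fin nx → ℝ) → (Fin nu → ℝ) → (Fin nx → ℝ))
    (hfc : ∀ x u i, fc x u i =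
        (A.mulVec (fun k => φ k (x k)) + B.mulVec (Ψ u) + c) i / deriv (φ i) (x i)) :
    ∀ (x : Fin nx → ℝ) (u : Fin nu → ℝ) (i j : Fin nx), i ≠ j →
      Real.sign (deriv (fun s => fc (Function.update x j s) u i) (x j))
        = Real.sign (A i j) := by
  intro x u i j hij
  set d : ℝ := deriv (φ i) (x i) with hd
  set C : ℝ := (∑ k ∈ Finset.univ.erase j, A i k * φ k (x k))
      + (B.mulVec (Ψ u) i + c i) with hC
  have hfun : (fun s => fc (Function.update x j s) u i)
      = fun s => (A i j * φ j s + C) / d := by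
    funext s
    rw [hfc]
    have hxi : Function.update x j s i = x i := Function.update_of_ne hij s x
    rw [hxi]
    congr 1
    simp only [Pi.add_apply, Matrix.mulVec, dotProduct, hC]
    rw [← Finset.add_sum_erase _ _ (Finset.mem_univ j)]
    simp only [Function.update_self]
    have hsum : ∀ k ∈ Finset.univ.erase j,
        A i k * φ k (Function.update x j s k) = A i k * φ k (x k) := fun k hk => by
      rw [Function.update_of_ne (Finset.ne_of_mem_erase hk)]
    rw [Finset.sum_congr rfl hsum]
    ring
  rw [hfun]
  have hdiff : DifferentiableAt ℝ (φ j) (x j) :=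
    ((hφ j).differentiable one_ne_zero).differentiableAt
  have : deriv (fun s => (A i j * φ j s + C) / d) (x j)
      = A i j * deriv (φ j) (x j) / d := by
    rw [deriv_div_const, deriv_add_const, deriv_const_mul _ hdiff]
  rw [this, mul_div_assoc]
  exact sign_mul_pos_right _ _ (div_pos (hφ' j (x j)) (hφ' i (x i)))
end

section
/- Let Φ be a componentwise strictly increasing bijection of ℝ^{n_x} with Φ(0) = 0, and let Ψ be componentwise strictly increasing in u with Ψ(0;x) = 0 for all x. Then the discrete-time system x(t+1) = Φ⁻¹(AΦ(x(t)) + BΨ(u(t); x(t)) + c) is positive if and only if A_{ij} ≥ 0 for all i, j ∈ {1,…,n_x}, B_{ij} ≥ 0 for all i ∈ {1,…,n_x}, j ∈ {1,…,n_u}, and c_i ≥ 0 for all i ∈ {1,…,n_x}. -/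
/-- Trajectory of the discrete-time system `x(t+1) = f(x(t), u(t))` determined by
initial state `x0` and input sequence `u`. -/
def traj {nx nu : ℕ} (f : (Fin nx → ℝ) → (Fin nu → ℝ) → (Fin nx → ℝ))
    (x0 : Fin nx → ℝ) (u : ℕ → Fin nu → ℝ) : ℕ → Fin nx → ℝ
  | 0 => x0
  | t + 1 => f (traj f x0 u t) (u t)

/-- Let `Φ(x)_i = φ_i(x_i)` with each `φ_i` a strictly increasing bijection of `ℝ`
with `φ_i(0) = 0`, and let `Ψ(u;x)_j = ψ_j(u_j;x)` with each `ψ_j(·;x)` a strictly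
increasing bijection of `ℝ` with `ψ_j(0;x) = 0`. Then the discrete-time system
`x(t+1) = Φ⁻¹(AΦ(x(t)) + BΨ(u(t);x(t)) + c)` is positive if and only if all
entries of `A`, `B`, and `c` are nonnegative. -/
theorem exlin_discrete_positive_iff_nonneg_entries {nx nu : ℕ}
    (A : Matrix (Fin nx) (Fin nx) ℝ) (B : Matrix (Fin nx) (Fin nu) ℝ)
    (c : Fin nx → ℝ)
    (φ : Fin nx → ℝ → ℝ) (φinv : Fin nx → ℝ → ℝ)
    (hφmono : ∀ i, StrictMono (φ i))
    (hφbij : ∀ i, Function.Bijective (φ i))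
    (hφinvL : ∀ i, Function.LeftInverse (φinv i) (φ i))
    (hφinvR : ∀ i, Function.RightInverse (φinv i) (φ i))
    (hφ0 : ∀ i, φ i 0 = 0)
    (ψ : Fin nu → ℝ → (Fin nx → ℝ) → ℝ)
    (hψmono : ∀ (j : Fin nu) (x : Fin nx → ℝ), StrictMono (fun t => ψ j t x))
    (hψbij : ∀ (j : Fin nu) (x : Fin nx → ℝ), Function.Bijective (fun t => ψ j t x))
    (hψ0 : ∀ (j : Fin nu) (x : Fin nx → ℝ), ψ j 0 x = 0)
    (f : (Fin nx → ℝ) → (Fin nu → ℝ) → (Fin nx → ℝ))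
    (hf : ∀ x u i, f x u i =
        φinv i ((A.mulVec (fun k => φ k (x k))
          + B.mulVec (fun j => ψ j (u j) x) + c) i)) :
    (∀ (x0 : Fin nx → ℝ) (u : ℕ → Fin nu → ℝ),
        0 ≤ x0 → (∀ t, 0 ≤ u t) → ∀ t, 0 ≤ traj f x0 u t)
    ↔ ((∀ i j, 0 ≤ A i j) ∧ (∀ i j, 0 ≤ B i j) ∧ (∀ i, 0 ≤ c i)) := by
  have hinv0 : ∀ (i : Fin nx) (y : ℝ), 0 ≤ y → 0 ≤ φinv i y := by
    intro i y hy
    have := (hφmono i).le_iff_le (a := 0) (b := φinv i y)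
    rw [hφ0 i, hφinvR i y] at this
    exact this.mp hy
  have hinv0' : ∀ (i : Fin nx) (y : ℝ), 0 ≤ φinv i y → 0 ≤ y := by
    intro i y hy
    have := (hφmono i).le_iff_le (a := 0) (b := φinv i y)
    rw [hφ0 i, hφinvR i y] at this
    exact this.mpr hy
  constructor
  · intro hpos
    have step : ∀ (x0 : Fin nx → ℝ) (u0 : Fin nu → ℝ), 0 ≤ x0 → 0 ≤ u0 →
        ∀ i, 0 ≤ (A.mulVec (fun k => φ k (x0 k))
          + B.mulVec (fun j => ψ j (u0 j) x0) + c) i := by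
      intro x0 u0 hx0 hu0 i
      have h1 := hpos x0 (fun _ => u0) hx0 (fun _ => hu0) 1 i
      simp only [traj] at h1
      rw [hf] at h1
      exact hinv0' i _ h1
    have hc : ∀ i, 0 ≤ c i := by
      intro i
      have := step 0 0 le_rfl le_rfl i
      simp only [Pi.zero_apply, hφ0, hψ0] at this
      simpa [Matrix.mulVec, dotProduct] using this
    refine ⟨?_, ?_, hc⟩
    · intro i j
      by_contra hA
      push_neg at hA
      set s : ℝ := (c i + 1) / (-(A i j)) with hs
      have hspos : 0 < s := div_pos (by linarith [hc i]) (by linarith)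
      set x0 : Fin nx → ℝ := Pi.single j (φinv j s) with hx0
      have hx0nn : 0 ≤ x0 := by
        intro k
        by_cases hk : k = j
        · rw [hx0, Pi.single_apply, if_pos hk]
          exact hinv0 _ s hspos.le
        · simp [hx0, Pi.single_apply, hk]
      have hφx0 : (fun k => φ k (x0 k)) = Pi.single j s := by
        funext k
        by_cases hk : k = j
        · subst hk
          rw [hx0]
          simp only [Pi.single_apply, if_pos rfl]
          exact hφinvR _ s
        · simp [hx0, Pi.single_apply, hk, hφ0]
      have hst := step x0 0 hx0nn le_rfl i
      rw [hφx0] at hst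
      simp only [Pi.zero_apply, hψ0, Matrix.mulVec_single] at hst
      have hB0 : B.mulVec (fun j => (0:ℝ)) = 0 := by
        funext k; simp [Matrix.mulVec, dotProduct]
      rw [hB0] at hst
      simp only [Pi.add_apply, Pi.zero_apply, add_zero, Pi.smul_apply, Matrix.col_apply, op_smul_eq_mul] at hst
      have hkey : A i j * s = -(c i + 1) := by
        rw [hs]
        have hne : -(A i j) ≠ 0 := by linarith
        field_simp
        rw [mul_div_cancel_left₀ _ (neg_ne_zero.mp hne)]
      rw [hkey] at hst
      linarith
    · intro i j
      by_contra hB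
      push_neg at hB
      set s : ℝ := (c i + 1) / (-(B i j)) with hs
      have hspos : 0 < s := div_pos (by linarith [hc i]) (by linarith)
      obtain ⟨tv, htv⟩ := (hψbij j 0).2 s
      have htvpos : 0 < tv := by
        have h := (hψmono j 0).lt_iff_lt (a := 0) (b := tv)
        simp only at h htv
        rw [hψ0, htv] at h
        exact h.mp hspos
      set u0 : Fin nu → ℝ := Pi.single j tv with hu0
      have hu0nn : 0 ≤ u0 := by
        intro k
        by_cases hk : k = j
        · rw [hu0, Pi.single_apply, if_pos hk]; exact htvpos.le
        · simp [hu0, Pi.single_apply, hk]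
      have hψu0 : (fun k => ψ k (u0 k) (0 : Fin nx → ℝ)) = Pi.single j s := by
        funext k
        by_cases hk : k = j
        · subst hk
          rw [hu0]
          simp only [Pi.single_apply, if_pos rfl]
          exact htv
        · simp [hu0, Pi.single_apply, hk, hψ0]
      have hst := step 0 u0 le_rfl hu0nn i
      rw [hψu0] at hst
      simp only [Pi.zero_apply, hφ0, Matrix.mulVec_single] at hst
      have hA0 : A.mulVec (fun k => (0:ℝ)) = 0 := by
        funext k; simp [Matrix.mulVec, dotProduct]
      rw [hA0] at hst
      simp only [Pi.add_apply, Pi.zero_apply, zero_add, Pi.smul_apply, Matrix.col_apply, op_smul_eq_mul] at hst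
      have hkey : B i j * s = -(c i + 1) := by
        rw [hs]
        have hne : -(B i j) ≠ 0 := by linarith
        field_simp
        rw [mul_div_cancel_left₀ _ (neg_ne_zero.mp hne)]
      rw [hkey] at hst
      linarith
  · rintro ⟨hA, hB, hc⟩ x0 u hx0 hu t
    induction t with
    | zero => exact hx0
    | succ t ih =>
      intro i
      simp only [traj]
      rw [hf]
      apply hinv0
      simp only [Pi.add_apply]
      have h1 : 0 ≤ A.mulVec (fun k => φ k (traj f x0 u t k)) i := by
        simp only [Matrix.mulVec, dotProduct]
        apply Finset.sum_nonneg
        intro k _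
        apply mul_nonneg (hA i k)
        have h := (hφmono k).le_iff_le (a := 0) (b := traj f x0 u t k)
        rw [hφ0 k] at h
        exact h.mpr (ih k)
      have h2 : 0 ≤ B.mulVec (fun j => ψ j (u t j) (traj f x0 u t)) i := by
        simp only [Matrix.mulVec, dotProduct]
        apply Finset.sum_nonneg
        intro k _
        apply mul_nonneg (hB i k)
        have h := (hψmono k (traj f x0 u t)).le_iff_le (a := 0) (b := u t k)
        simp only [hψ0] at h
        exact h.mpr (hu t k)
      have := hc i
      linarith
end
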